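/- Let q ≥ 1 and T be positive integers, and let n : Fin (3*q) → ℕ be a family of positive integers such that ∑ i, n i = q * T and for every i, T < 4 * (n i) and 2 * (n i) < T. Then there exists an assignment f : Fin (3*q) → Fin q such that for every j : Fin q the load ∑_{i with f i = j} n i is at most T, if and only if there exists a partition of Fin (3*q) into q pairwise disjoint three-element subsets A₁, …, A_q with ∑_{i ∈ A_j} n i = T for every j. -/
import Mathlib


/-- The combinatorial core of the 3-Partition reduction:
an assignment of the `3*q` jobs to `q` machines with every load at most `T`
exists iff there is a partition of `Fin (3*q)` into `q` pairwise disjoint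
three-element subsets each summing to `T`. -/
theorem three_partition_iff_assignment
    (q T : ℕ) (hq : 1 ≤ q) (hT : 0 < T)
    (n : Fin (3 * q) → ℕ) (hpos : ∀ i, 0 < n i)
    (hsum : ∑ i, n i = q * T)
    (hlo : ∀ i, T < 4 * n i) (hhi : ∀ i, 2 * n i < T) :
    (∃ f : Fin (3 * q) → Fin q,
        ∀ j : Fin q, ∑ i ∈ Finset.univ.filter (fun i => f i = j), n i ≤ T) ↔
    (∃ A : Fin q → Finset (Fin (3 * q)),
        (∀ j, (A j).card = 3) ∧
        (∀ j₁ j₂, j₁ ≠ j₂ → Disjoint (A j₁) (A j₂)) ∧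
        (∀ i, ∃ j, i ∈ A j) ∧
        (∀ j, ∑ i ∈ A j, n i = T)) := by
  constructor
  · rintro ⟨f, hf⟩
    have htot : ∑ j : Fin q, ∑ i ∈ Finset.univ.filter (fun i => f i = j), n i
        = q * T := by
      rw [Finset.sum_fiberwise Finset.univ f n]; exact hsum
    have hconst : ∑ _j : Fin q, T = q * T := by simp [Finset.sum_const, mul_comm]
    have heq : ∀ j : Fin q,
        ∑ i ∈ Finset.univ.filter (fun i => f i = j), n i = T := by
      have := (Finset.sum_eq_sum_iff_of_le
        (f := fun j : Fin q => ∑ i ∈ Finset.univ.filter (fun i => f i = j), n i)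
        (g := fun _ => T) (fun j _ => hf j)).mp (by rw [htot, hconst])
      intro j; exact this j (Finset.mem_univ j)
    refine ⟨fun j => Finset.univ.filter (fun i => f i = j), ?_, ?_, ?_, heq⟩
    · intro j
      set S := Finset.univ.filter (fun i => f i = j) with hS
      have hsS : ∑ i ∈ S, n i = T := heq j
      have h1 : S.card * (T + 1) ≤ 4 * T := by
        calc S.card * (T + 1) = S.card • (T + 1) := by simp
          _ ≤ ∑ i ∈ S, 4 * n i :=
            Finset.card_nsmul_le_sum S _ _ (fun i _ => hlo i)
          _ = 4 * T := by rw [← Finset.mul_sum, hsS]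
      have h2 : 2 * T + S.card ≤ S.card * T := by
        calc 2 * T + S.card = ∑ i ∈ S, (2 * n i + 1) := by
              rw [Finset.sum_add_distrib, ← Finset.mul_sum, hsS, Finset.sum_const,
                smul_eq_mul, mul_one]
          _ ≤ ∑ _i ∈ S, T := Finset.sum_le_sum (fun i _ => hhi i)
          _ = S.card * T := by rw [Finset.sum_const, smul_eq_mul]
      nlinarith [h1, h2, hT]
    · intro j₁ j₂ hne
      simp only [Finset.disjoint_left, Finset.mem_filter]
      rintro i ⟨-, h1⟩ ⟨-, h2⟩
      exact hne (h1 ▸ h2 ▸ rfl)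
    · intro i; exact ⟨f i, by simp⟩
  · rintro ⟨A, hcard, hdisj, hcover, hsumA⟩
    refine ⟨fun i => (hcover i).choose, fun j => ?_⟩
    have hmem : ∀ i, i ∈ A ((hcover i).choose) := fun i => (hcover i).choose_spec
    have hfib : Finset.univ.filter (fun i => (hcover i).choose = j) = A j := by
      ext i
      simp only [Finset.mem_filter, Finset.mem_univ, true_and]
      constructor
      · rintro rfl; exact hmem i
      · intro hi
        by_contra hne
        exact (Finset.disjoint_left.mp (hdisj _ _ hne) (hmem i)) hi
    rw [hfib, hsumA j]
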